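/- Let λ > 0, let 0 < α_j ≤ 1 for all j ≥ 0, and for integers k ≥ n ≥ 0 define the ADM component u(n,k,t) = (−1)^n (−λ)^k ∑_{(k_0,…,k_n) ∈ Θ^k_n} t^{∑_{j=0}^n k_j α_j} / Γ(1 + ∑_{j=0}^n k_j α_j) for t ≥ 0, with u(n,k,t) = 0 for 0 ≤ k < n and u(−1,k,t) = 0. Then for every n ≥ 0 and every k ≥ 1, u(n,k,t) = −λ · (I^{α_n}_t ( u(n,k−1,·) − u(n−1,k−1,·) ))(t) for all t ≥ 0, and u(0,0,t) = 1. -/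

import Mathlib

open scoped BigOperators

/-- Riemann–Liouville fractional integral of order `α`. -/
noncomputable def rlInt (α : ℝ) (f : ℝ → ℝ) (t : ℝ) : ℝ :=
  (1 / Real.Gamma α) * ∫ s in (0:ℝ)..t, (t - s) ^ (α - 1) * f s

/-- `Theta n k` is the set of tuples `(k_0, …, k_n)` of nonnegative integers with
`k_0 + ⋯ + k_n = k` and `k_j ≥ 1` for `1 ≤ j ≤ n`. -/
def Theta (n k : ℕ) : Finset (Fin (n + 1) → ℕ) :=
  (Finset.Nat.antidiagonalTuple (n + 1) k).filter
    (fun κ => ∀ j : Fin (n + 1), 1 ≤ j.val → 1 ≤ κ j)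

/-- The state probabilities of SDTFPP-I (note that `Theta n k = ∅` for `k < n`,
so the series over all `k : ℕ` agrees with the series starting at `k = n`). -/
noncomputable def pI (lam : ℝ) (α : ℕ → ℝ) (n : ℕ) (t : ℝ) : ℝ :=
  (-1 : ℝ) ^ n * ∑' k : ℕ, (-lam) ^ k *
    ∑ κ ∈ Theta n k,
      t ^ (∑ j, (κ j : ℝ) * α j.val) / Real.Gamma (1 + ∑ j, (κ j : ℝ) * α j.val)

/-- The `k`-th Adomian decomposition component of the SDTFPP-I state probability
`p^{α_n}(n, ·)`.  Since `Theta n k = ∅` for `k < n`, we automatically have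
`admComp lam α n k t = 0` for `k < n`. -/
noncomputable def admComp (lam : ℝ) (α : ℕ → ℝ) (n k : ℕ) (t : ℝ) : ℝ :=
  (-1 : ℝ) ^ n * (-lam) ^ k *
    ∑ κ ∈ Theta n k,
      t ^ (∑ j, (κ j : ℝ) * α j.val) / Real.Gamma (1 + ∑ j, (κ j : ℝ) * α j.val)

/-!
Each ADM component is a finite combination of the functions `t ^ β / Γ(1 + β)`, and the
Riemann–Liouville integral of order `a` sends this function to the one with exponent `β + a`
(a Beta integral). The recursion thus reduces to a bijection of index sets: a tuple of
`Θ^{k+1}_{n+1}` either has last entry `≥ 2`, and lowering it by one gives a tuple of `Θ^k_{n+1}`,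
or has last entry `1`, and dropping it gives a tuple of `Θ^k_n`; in both cases the exponent
`∑ k_j α_j` drops by `α_{n+1}`.
-/

theorem integral_sub_rpow_mul_rpow {a b t : ℝ} (ha : 0 < a) (hb : 0 < b) (ht : 0 < t) :
    ∫ s in (0:ℝ)..t, (t - s) ^ (a - 1) * s ^ (b - 1)
      = Real.Gamma a * Real.Gamma b / Real.Gamma (a + b) * t ^ (a + b - 1) := by
  apply Complex.ofReal_injective
  have hcpow : Set.EqOn (fun s : ℝ => (((t - s) ^ (a - 1) * s ^ (b - 1) : ℝ) : ℂ))
      (fun s : ℝ => (s : ℂ) ^ ((b : ℂ) - 1) * ((t : ℂ) - s) ^ ((a : ℂ) - 1)) (Set.uIcc 0 t) := by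
    intro s hs
    rw [Set.uIcc_of_le ht.le] at hs
    push_cast [Complex.ofReal_cpow hs.1, Complex.ofReal_cpow (sub_nonneg.2 hs.2)]
    ring
  rw [← intervalIntegral.integral_ofReal, intervalIntegral.integral_congr hcpow,
    Complex.betaIntegral_scaled _ _ ht,
    Complex.betaIntegral_eq_Gamma_mul_div _ _ (by simpa using hb) (by simpa using ha)]
  push_cast [Complex.ofReal_cpow ht.le, ← Complex.Gamma_ofReal]
  ring_nf

noncomputable def powDivGamma (β t : ℝ) : ℝ := t ^ β / Real.Gamma (1 + β)

theorem continuous_powDivGamma {β : ℝ} (hβ : 0 ≤ β) : Continuous (powDivGamma β) :=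
  (Real.continuous_rpow_const hβ).div_const _

theorem intervalIntegrable_sub_rpow_mul {a t : ℝ} {f : ℝ → ℝ} (ha : 0 < a)
    (hf : ContinuousOn f (Set.uIcc 0 t)) :
    IntervalIntegrable (fun s => (t - s) ^ (a - 1) * f s) MeasureTheory.volume 0 t := by
  have hker := (intervalIntegral.intervalIntegrable_rpow' (a := 0) (b := t)
    (r := a - 1) (by linarith)).comp_sub_left t
  simp only [sub_zero, sub_self] at hker
  exact hker.symm.mul_continuousOn hf

theorem rlInt_const_mul (a c : ℝ) (f : ℝ → ℝ) (t : ℝ) :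
    rlInt a (fun s => c * f s) t = c * rlInt a f t := by
  simp only [rlInt, mul_left_comm _ c, intervalIntegral.integral_const_mul]

theorem rlInt_sub {a t : ℝ} {f g : ℝ → ℝ}
    (hf : IntervalIntegrable (fun s => (t - s) ^ (a - 1) * f s) MeasureTheory.volume 0 t)
    (hg : IntervalIntegrable (fun s => (t - s) ^ (a - 1) * g s) MeasureTheory.volume 0 t) :
    rlInt a (fun s => f s - g s) t = rlInt a f t - rlInt a g t := by
  simp only [rlInt, mul_sub, intervalIntegral.integral_sub hf hg]

theorem rlInt_finset_sum {ι : Type*} {a t : ℝ} (u : Finset ι) {f : ι → ℝ → ℝ}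
    (hf : ∀ i ∈ u,
      IntervalIntegrable (fun s => (t - s) ^ (a - 1) * f i s) MeasureTheory.volume 0 t) :
    rlInt a (fun s => ∑ i ∈ u, f i s) t = ∑ i ∈ u, rlInt a (f i) t := by
  simp only [rlInt, Finset.mul_sum, intervalIntegral.integral_finsetSum hf]

theorem rlInt_powDivGamma {a β t : ℝ} (ha : 0 < a) (hβ : 0 ≤ β) (ht : 0 ≤ t) :
    rlInt a (powDivGamma β) t = powDivGamma (β + a) t := by
  rcases ht.eq_or_lt with rfl | ht
  · simp [rlInt, powDivGamma, Real.zero_rpow (by positivity : β + a ≠ 0)]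
  have hbeta := integral_sub_rpow_mul_rpow ha (by linarith : 0 < β + 1) ht
  rw [add_sub_cancel_right, ← add_assoc, add_sub_cancel_right] at hbeta
  simp only [rlInt, powDivGamma, mul_div_assoc', intervalIntegral.integral_div]
  rw [hbeta]
  field_simp
  ring_nf

noncomputable def thetaExponent (α : ℕ → ℝ) {m : ℕ} (κ : Fin m → ℕ) : ℝ :=
  ∑ j, (κ j : ℝ) * α j

theorem thetaExponent_nonneg {α : ℕ → ℝ} (hα : ∀ j, 0 ≤ α j) {m : ℕ} (κ : Fin m → ℕ) :
    0 ≤ thetaExponent α κ :=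
  Finset.sum_nonneg fun j _ => mul_nonneg (Nat.cast_nonneg _) (hα j)

theorem thetaExponent_add_single_one (α : ℕ → ℝ) {m : ℕ} (κ : Fin m → ℕ) (i : Fin m) :
    thetaExponent α (κ + Pi.single i 1) = thetaExponent α κ + α i := by
  simp [thetaExponent, add_mul, Finset.sum_add_distrib, Pi.single_apply]

theorem thetaExponent_snoc (α : ℕ → ℝ) {m : ℕ} (κ : Fin m → ℕ) (c : ℕ) :
    thetaExponent α (Fin.snoc κ c : Fin (m + 1) → ℕ) = thetaExponent α κ + c * α m := by
  simp [thetaExponent, Fin.sum_univ_castSucc]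

theorem thetaExponent_fin_one (α : ℕ → ℝ) (c : ℕ) :
    thetaExponent α (fun _ : Fin 1 => c) = c * α 0 := by
  simp [thetaExponent]

theorem mem_Theta {n k : ℕ} {κ : Fin (n + 1) → ℕ} :
    κ ∈ Theta n k ↔ ∑ j, κ j = k ∧ ∀ j : Fin (n + 1), 1 ≤ j.val → 1 ≤ κ j := by
  simp [Theta, Finset.Nat.mem_antidiagonalTuple]

theorem Theta_zero (k : ℕ) : Theta 0 k = {fun _ => k} := by
  ext κ
  simp only [mem_Theta, Finset.mem_singleton]
  exact ⟨fun h => funext fun j => Fin.fin_one_eq_zero j ▸ h.1, fun h => ⟨h ▸ rfl, by simp⟩⟩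

theorem sum_add_single_one {ι : Type*} [Fintype ι] [DecidableEq ι] (κ : ι → ℕ) (i : ι) :
    ∑ j, (κ + Pi.single i 1 : ι → ℕ) j = ∑ j, κ j + 1 := by
  simp [Finset.sum_add_distrib]

theorem one_le_last_of_mem_Theta {n k : ℕ} {κ : Fin (n + 2) → ℕ} (hκ : κ ∈ Theta (n + 1) k) :
    1 ≤ κ (Fin.last _) :=
  (mem_Theta.1 hκ).2 _ (by simp)

theorem sum_Theta_filter_two_le_last {M : Type*} [AddCommMonoid M] (n k : ℕ)
    (f : (Fin (n + 2) → ℕ) → M) :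
    ∑ κ ∈ (Theta (n + 1) (k + 1)).filter (fun κ => 2 ≤ κ (Fin.last _)), f κ
      = ∑ κ ∈ Theta (n + 1) k, f (κ + Pi.single (Fin.last _) 1) := by
  have hcancel : ∀ κ : Fin (n + 2) → ℕ, 1 ≤ κ (Fin.last _) →
      κ - Pi.single (Fin.last _) 1 + Pi.single (Fin.last _) 1 = κ := by
    intro κ hκ
    funext j
    rcases eq_or_ne j (Fin.last _) with rfl | hj
    · simp only [Pi.add_apply, Pi.sub_apply, Pi.single_eq_same]
      omega
    · simp [hj]
  refine Finset.sum_nbij' (fun κ => κ - Pi.single (Fin.last _) 1)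
    (fun κ => κ + Pi.single (Fin.last _) 1) ?_ ?_ ?_ ?_ ?_
  · intro κ hκ
    simp only [Finset.mem_filter, mem_Theta] at hκ ⊢
    obtain ⟨⟨hsum, hpos⟩, hlast⟩ := hκ
    refine ⟨?_, fun j hj => ?_⟩
    · rw [← hcancel κ (by omega), sum_add_single_one] at hsum
      omega
    · rcases eq_or_ne j (Fin.last _) with rfl | hj'
      · simp only [Pi.sub_apply, Pi.single_eq_same]
        omega
      · simpa [hj'] using hpos j hj
  · intro κ hκ
    have hlast := one_le_last_of_mem_Theta hκ
    simp only [Finset.mem_filter, mem_Theta] at hκ ⊢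
    obtain ⟨hsum, hpos⟩ := hκ
    refine ⟨⟨by rw [sum_add_single_one, hsum], fun j hj => ?_⟩, by simpa using hlast⟩
    exact (hpos j hj).trans (by simp)
  · intro κ hκ
    simp only [Finset.mem_filter] at hκ
    exact hcancel κ (by omega)
  · intro κ _
    simp
  · intro κ hκ
    simp only [Finset.mem_filter] at hκ
    rw [hcancel κ (by omega)]

theorem sum_Theta_filter_last_lt_two {M : Type*} [AddCommMonoid M] (n k : ℕ)
    (f : (Fin (n + 2) → ℕ) → M) :
    ∑ κ ∈ (Theta (n + 1) (k + 1)).filter (fun κ => ¬ 2 ≤ κ (Fin.last _)), f κ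
      = ∑ κ ∈ Theta n k, f (Fin.snoc κ 1) := by
  have hsnoc : ∀ κ : Fin (n + 2) → ℕ, κ (Fin.last _) = 1 → Fin.snoc (Fin.init κ) 1 = κ := by
    intro κ hκ
    conv_rhs => rw [← Fin.snoc_init_self κ, hκ]
  have hlast : ∀ κ ∈ (Theta (n + 1) (k + 1)).filter (fun κ => ¬ 2 ≤ κ (Fin.last _)),
      κ (Fin.last _) = 1 := by
    intro κ hκ
    rw [Finset.mem_filter] at hκ
    have := one_le_last_of_mem_Theta hκ.1
    omega
  refine Finset.sum_nbij' Fin.init (fun κ => Fin.snoc κ 1) ?_ ?_ ?_ ?_ ?_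
  · intro κ hκ
    obtain ⟨hsum, hpos⟩ := mem_Theta.1 (Finset.mem_filter.1 hκ).1
    refine mem_Theta.2 ⟨?_, fun j hj => hpos j.castSucc hj⟩
    rw [Fin.sum_univ_castSucc, hlast κ hκ] at hsum
    simpa [Fin.init] using hsum
  · intro κ hκ
    simp only [Finset.mem_filter, mem_Theta] at hκ ⊢
    obtain ⟨hsum, hpos⟩ := hκ
    refine ⟨⟨by simp [Fin.sum_univ_castSucc, hsum], fun j hj => ?_⟩, by simp⟩
    induction j using Fin.lastCases with
    | last => simp
    | cast i => simpa using hpos i hj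
  · intro κ hκ
    exact hsnoc κ (hlast κ hκ)
  · intro κ _
    simp
  · intro κ hκ
    rw [hsnoc κ (hlast κ hκ)]

theorem sum_Theta_succ_succ {M : Type*} [AddCommMonoid M] (n k : ℕ)
    (f : (Fin (n + 2) → ℕ) → M) :
    ∑ κ ∈ Theta (n + 1) (k + 1), f κ
      = ∑ κ ∈ Theta (n + 1) k, f (κ + Pi.single (Fin.last _) 1)
        + ∑ κ ∈ Theta n k, f (Fin.snoc κ 1) := by
  rw [← Finset.sum_filter_add_sum_filter_not _ (fun κ => 2 ≤ κ (Fin.last _)),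
    sum_Theta_filter_two_le_last, sum_Theta_filter_last_lt_two]

theorem admComp_eq_sum (lam : ℝ) (α : ℕ → ℝ) (n k : ℕ) (t : ℝ) :
    admComp lam α n k t = (-1 : ℝ) ^ n * (-lam) ^ k *
      ∑ κ ∈ Theta n k, powDivGamma (thetaExponent α κ) t :=
  rfl

theorem continuous_admComp (lam : ℝ) {α : ℕ → ℝ} (hα : ∀ j, 0 ≤ α j) (n k : ℕ) :
    Continuous (admComp lam α n k) :=
  continuous_const.mul <| continuous_finsetSum _ fun κ _ =>
    continuous_powDivGamma (thetaExponent_nonneg hα κ)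

theorem rlInt_admComp (lam : ℝ) {α : ℕ → ℝ} (hα : ∀ j, 0 ≤ α j) (n k : ℕ) {a t : ℝ}
    (ha : 0 < a) (ht : 0 ≤ t) :
    rlInt a (admComp lam α n k) t = (-1 : ℝ) ^ n * (-lam) ^ k *
      ∑ κ ∈ Theta n k, powDivGamma (thetaExponent α κ + a) t := by
  have hterm (κ : Fin (n + 1) → ℕ) := continuous_powDivGamma (thetaExponent_nonneg hα κ)
  rw [funext (admComp_eq_sum lam α n k), rlInt_const_mul, rlInt_finset_sum _ fun κ _ =>
    intervalIntegrable_sub_rpow_mul ha (hterm κ).continuousOn]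
  simp only [rlInt_powDivGamma ha (thetaExponent_nonneg hα _) ht]

theorem admComp_zero (lam : ℝ) (α : ℕ → ℝ) (k : ℕ) (t : ℝ) :
    admComp lam α 0 k t = (-lam) ^ k * powDivGamma (k * α 0) t := by
  rw [admComp_eq_sum, Theta_zero, Finset.sum_singleton, thetaExponent_fin_one, pow_zero, one_mul]

theorem admComp_succ_succ (lam : ℝ) (α : ℕ → ℝ) (n k : ℕ) (t : ℝ) :
    admComp lam α (n + 1) (k + 1) t = -lam *
      ((-1 : ℝ) ^ (n + 1) * (-lam) ^ k *
          ∑ κ ∈ Theta (n + 1) k, powDivGamma (thetaExponent α κ + α (n + 1)) t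
        - (-1 : ℝ) ^ n * (-lam) ^ k *
          ∑ κ ∈ Theta n k, powDivGamma (thetaExponent α κ + α (n + 1)) t) := by
  simp only [admComp_eq_sum, sum_Theta_succ_succ, thetaExponent_add_single_one,
    thetaExponent_snoc, Fin.val_last, Nat.cast_one, one_mul]
  ring

theorem admComp_recursion_general (lam : ℝ)
    (α : ℕ → ℝ) (hα : ∀ j, 0 < α j ∧ α j ≤ 1) :
    (∀ n : ℕ, ∀ k : ℕ, 1 ≤ k → ∀ t : ℝ, 0 ≤ t →
        admComp lam α n k t
          = -lam * rlInt (α n)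
              (fun u => admComp lam α n (k - 1) u
                - (if n = 0 then (0:ℝ) else admComp lam α (n - 1) (k - 1) u)) t)
      ∧ (∀ t : ℝ, admComp lam α 0 0 t = 1) := by
  have hα₀ : ∀ j, 0 ≤ α j := fun j => (hα j).1.le
  refine ⟨fun n k hk t ht => ?_, fun t => by simp [admComp_zero, powDivGamma]⟩
  obtain ⟨k, rfl⟩ := Nat.exists_eq_add_of_le' hk
  rw [Nat.add_sub_cancel]
  cases n with
  | zero =>
    simp only [if_true, sub_zero]
    rw [rlInt_admComp lam hα₀ 0 k (hα 0).1 ht, admComp_zero, Theta_zero, Finset.sum_singleton,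
      thetaExponent_fin_one, Nat.cast_add_one, add_one_mul]
    ring
  | succ n =>
    have hint (m : ℕ) := intervalIntegrable_sub_rpow_mul (t := t) (hα (n + 1)).1
      (continuous_admComp lam hα₀ m k).continuousOn
    simp only [Nat.add_one_ne_zero, if_false, Nat.add_sub_cancel]
    rw [rlInt_sub (hint (n + 1)) (hint n),
      rlInt_admComp lam hα₀ _ _ (hα _).1 ht, rlInt_admComp lam hα₀ _ _ (hα _).1 ht,
      admComp_succ_succ]

/-- The Adomian decomposition components of SDTFPP-I satisfy the ADM recursion
(with the convention that the component for state `−1` is `0`), and the zeroth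
component of state `0` is identically `1`. -/
theorem admComp_recursion (lam : ℝ) (hlam : 0 < lam)
    (α : ℕ → ℝ) (hα : ∀ j, 0 < α j ∧ α j ≤ 1) :
    (∀ n : ℕ, ∀ k : ℕ, 1 ≤ k → ∀ t : ℝ, 0 ≤ t →
        admComp lam α n k t
          = -lam * rlInt (α n)
              (fun u => admComp lam α n (k - 1) u
                - (if n = 0 then (0:ℝ) else admComp lam α (n - 1) (k - 1) u)) t)
      ∧ (∀ t : ℝ, admComp lam α 0 0 t = 1) :=
  admComp_recursion_general lam α hα
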